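/- Let τ > 0 and θ ∈ ℝ, and define u_θ, v_θ : ℝ² → ℝ by u_θ(x,y) = −τxy + (sinh θ/(4τ))(2τx (1 + 4τ²x²)^(1/2) + arcsinh(2τx)) and v_θ(x,y) = (1/cosh θ)(1/(4τ²) + x²)^(1/2) + tanh(θ) y. Then (v_θ)_x² + (v_θ)_y² < 1 everywhere and u_θ and v_θ satisfy the twin relations (u_θ)_x = (v_θ)_y/ω̃ − τy and (u_θ)_y = −(v_θ)_x/ω̃ + τx on ℝ², where ω̃ = (1 − (v_θ)_x² − (v_θ)_y²)^(1/2). -/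

import Mathlib

/-- Partial derivative in the `x` direction. -/
noncomputable def px (f : ℝ × ℝ → ℝ) (p : ℝ × ℝ) : ℝ := fderiv ℝ f p (1, 0)

/-- Partial derivative in the `y` direction. -/
noncomputable def py (f : ℝ × ℝ → ℝ) (p : ℝ × ℝ) : ℝ := fderiv ℝ f p (0, 1)

/-- Lorentzian area element `ω̃ = (1 − v_x² − v_y²)^(1/2)` of the graph of `v`. -/
noncomputable def omegT (v : ℝ × ℝ → ℝ) (p : ℝ × ℝ) : ℝ :=
  Real.sqrt (1 - (px v p) ^ 2 - (py v p) ^ 2)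

/-- The invariant minimal graph
`u_θ(x,y) = −τxy + (sinh θ/(4τ))(2τx (1 + 4τ²x²)^(1/2) + arcsinh(2τx))` in `Nil₃(τ)`. -/
noncomputable def uTheta (τ θ : ℝ) : ℝ × ℝ → ℝ := fun p =>
  -τ * p.1 * p.2 + (Real.sinh θ / (4 * τ)) *
    (2 * τ * p.1 * Real.sqrt (1 + 4 * τ ^ 2 * p.1 ^ 2) + Real.arsinh (2 * τ * p.1))

/-- The hyperbolically rotated cylinder
`v_θ(x,y) = (1/cosh θ)(1/(4τ²) + x²)^(1/2) + tanh(θ) y` in `𝕃³`. -/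
noncomputable def vTheta (τ θ : ℝ) : ℝ × ℝ → ℝ := fun p =>
  (1 / Real.cosh θ) * Real.sqrt (1 / (4 * τ ^ 2) + p.1 ^ 2) + Real.tanh θ * p.2

/-! The graph of `v_θ` is a hyperbolic rotation of the cylinder over `r(x) = √(1/(4τ²) + x²)`:
`(v_θ)_x = x / (r cosh θ)` and `(v_θ)_y = tanh θ`, so `cosh² θ − sinh² θ = 1` and
`x² = r² − 1/(4τ²)` give `ω̃ = 1 / (2τ r cosh θ)`. Since `x √(1 + x²) + arsinh x` is a primitive of
`2√(1 + x²)` and `√(1 + 4τ²x²) = 2τr`, also `(u_θ)_x = 2τ r sinh θ − τy` and `(u_θ)_y = −τx`, and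
the twin relations become algebraic identities. -/

open Real

lemma hasDerivAt_sqrt_const_add_sq {c x : ℝ} (h : c + x ^ 2 ≠ 0) :
    HasDerivAt (fun y => √(c + y ^ 2)) (x / √(c + x ^ 2)) x := by
  have h' := ((hasDerivAt_pow 2 x).const_add c).sqrt h
  convert h' using 1
  field_simp
  ring

lemma hasDerivAt_mul_sqrt_one_add_sq_add_arsinh (x : ℝ) :
    HasDerivAt (fun y => y * √(1 + y ^ 2) + arsinh y) (2 * √(1 + x ^ 2)) x := by
  have hpos : 0 < 1 + x ^ 2 := by positivity
  have hsq : √(1 + x ^ 2) ^ 2 = 1 + x ^ 2 := sq_sqrt hpos.le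
  have h : HasDerivAt (fun y => y * √(1 + y ^ 2) + arsinh y) _ x :=
    ((hasDerivAt_id' x).mul (hasDerivAt_sqrt_const_add_sq hpos.ne')).add (hasDerivAt_arsinh x)
  refine h.congr_deriv ?_
  field_simp
  linear_combination -hsq

section AffineInY

variable {F : ℝ → ℝ} {F' a b : ℝ} {p : ℝ × ℝ}

lemma hasFDerivAt_comp_fst_add_affine_mul_snd (hF : HasDerivAt F F' p.1) :
    HasFDerivAt (fun q : ℝ × ℝ => F q.1 + (a * q.1 + b) * q.2)
      ((F' + a * p.2) • ContinuousLinearMap.fst ℝ ℝ ℝ +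
        (a * p.1 + b) • ContinuousLinearMap.snd ℝ ℝ ℝ) p := by
  have h : HasFDerivAt (fun q : ℝ × ℝ => F q.1 + (a * q.1 + b) * q.2) _ p :=
    (hF.comp_hasFDerivAt p hasFDerivAt_fst).add
      (((hasFDerivAt_fst.const_mul a).add_const b).mul (hasFDerivAt_snd (𝕜 := ℝ) (p := p)))
  exact h.congr_fderiv (by module)

lemma px_eq_of_affine_in_snd {f : ℝ × ℝ → ℝ} (hf : ∀ q, f q = F q.1 + (a * q.1 + b) * q.2)
    (hF : HasDerivAt F F' p.1) : px f p = F' + a * p.2 := by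
  simp [funext hf, px, (hasFDerivAt_comp_fst_add_affine_mul_snd hF).fderiv]

lemma py_eq_of_affine_in_snd {f : ℝ × ℝ → ℝ} (hf : ∀ q, f q = F q.1 + (a * q.1 + b) * q.2)
    (hF : HasDerivAt F F' p.1) : py f p = a * p.1 + b := by
  simp [funext hf, py, (hasFDerivAt_comp_fst_add_affine_mul_snd hF).fderiv]

end AffineInY

section Twins

variable {τ : ℝ} (hτ : 0 < τ) (θ : ℝ)
include hτ

lemma sqrt_one_add_four_mul_sq (x : ℝ) :
    √(1 + 4 * τ ^ 2 * x ^ 2) = 2 * τ * √(1 / (4 * τ ^ 2) + x ^ 2) := by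
  rw [← sqrt_sq (by positivity : (0 : ℝ) ≤ 2 * τ), ← sqrt_mul (by positivity)]
  congr 1
  field_simp
  ring

lemma hasDerivAt_uTheta_profile (x : ℝ) :
    HasDerivAt (fun y => sinh θ / (4 * τ) *
        (2 * τ * y * √(1 + 4 * τ ^ 2 * y ^ 2) + arsinh (2 * τ * y)))
      (2 * τ * sinh θ * √(1 / (4 * τ ^ 2) + x ^ 2)) x := by
  have h : HasDerivAt (fun y => sinh θ / (4 * τ) *
      (2 * τ * y * √(1 + (2 * τ * y) ^ 2) + arsinh (2 * τ * y))) _ x :=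
    ((hasDerivAt_mul_sqrt_one_add_sq_add_arsinh (2 * τ * x)).comp x
      ((hasDerivAt_id' x).const_mul (2 * τ))).const_mul (sinh θ / (4 * τ))
  norm_num [mul_pow] at h
  refine h.congr_deriv ?_
  rw [sqrt_one_add_four_mul_sq hτ]
  field_simp
  ring

lemma hasDerivAt_vTheta_profile (x : ℝ) :
    HasDerivAt (fun y => 1 / cosh θ * √(1 / (4 * τ ^ 2) + y ^ 2))
      (x / (cosh θ * √(1 / (4 * τ ^ 2) + x ^ 2))) x := by
  have h := (hasDerivAt_sqrt_const_add_sq (c := 1 / (4 * τ ^ 2)) (x := x)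
    (by positivity)).const_mul (1 / cosh θ)
  refine h.congr_deriv ?_
  field_simp

lemma px_uTheta (p : ℝ × ℝ) :
    px (uTheta τ θ) p = 2 * τ * sinh θ * √(1 / (4 * τ ^ 2) + p.1 ^ 2) - τ * p.2 := by
  rw [px_eq_of_affine_in_snd (a := -τ) (b := 0) (fun q => by simp only [uTheta]; ring)
    (hasDerivAt_uTheta_profile hτ θ p.1)]
  ring

lemma py_uTheta (p : ℝ × ℝ) : py (uTheta τ θ) p = -τ * p.1 := by
  rw [py_eq_of_affine_in_snd (a := -τ) (b := 0) (fun q => by simp only [uTheta]; ring)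
    (hasDerivAt_uTheta_profile hτ θ p.1)]
  ring

lemma px_vTheta (p : ℝ × ℝ) :
    px (vTheta τ θ) p = p.1 / (cosh θ * √(1 / (4 * τ ^ 2) + p.1 ^ 2)) := by
  rw [px_eq_of_affine_in_snd (a := 0) (b := tanh θ) (fun q => by simp only [vTheta]; ring)
    (hasDerivAt_vTheta_profile hτ θ p.1)]
  ring

lemma py_vTheta (p : ℝ × ℝ) : py (vTheta τ θ) p = tanh θ := by
  rw [py_eq_of_affine_in_snd (a := 0) (b := tanh θ) (fun q => by simp only [vTheta]; ring)
    (hasDerivAt_vTheta_profile hτ θ p.1)]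
  ring

lemma one_sub_px_sq_sub_py_sq_vTheta (p : ℝ × ℝ) :
    1 - px (vTheta τ θ) p ^ 2 - py (vTheta τ θ) p ^ 2 =
      (1 / (2 * τ * cosh θ * √(1 / (4 * τ ^ 2) + p.1 ^ 2))) ^ 2 := by
  have hr : 4 * τ ^ 2 * √(1 / (4 * τ ^ 2) + p.1 ^ 2) ^ 2 = 1 + 4 * τ ^ 2 * p.1 ^ 2 := by
    rw [sq_sqrt (by positivity)]
    field_simp
  rw [px_vTheta hτ, py_vTheta hτ, tanh_eq_sinh_div_cosh]
  set r := √(1 / (4 * τ ^ 2) + p.1 ^ 2)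
  have hr0 : 0 < r := sqrt_pos.2 (by positivity)
  field_simp
  linear_combination (4 * τ ^ 2 * r ^ 2) * cosh_sq_sub_sinh_sq θ + hr

lemma omegT_vTheta (p : ℝ × ℝ) :
    omegT (vTheta τ θ) p = 1 / (2 * τ * cosh θ * √(1 / (4 * τ ^ 2) + p.1 ^ 2)) := by
  rw [omegT, one_sub_px_sq_sub_py_sq_vTheta hτ, sqrt_sq (by positivity)]

end Twins

/-- for `τ > 0` and `θ ∈ ℝ`, the entire minimal graph `u_θ` in
`Nil₃(τ)` and the hyperbolically rotated cylinder `v_θ` in `𝕃³` are dual: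
`v_θ` is spacelike and `u_θ`, `v_θ` satisfy the twin relations. -/
theorem uTheta_vTheta_dual (τ θ : ℝ) (hτ : 0 < τ) :
    ∀ p : ℝ × ℝ,
      ((px (vTheta τ θ) p) ^ 2 + (py (vTheta τ θ) p) ^ 2 < 1) ∧
      (px (uTheta τ θ) p = py (vTheta τ θ) p / omegT (vTheta τ θ) p - τ * p.2) ∧
      (py (uTheta τ θ) p = -px (vTheta τ θ) p / omegT (vTheta τ θ) p + τ * p.1) := by
  intro p
  have hr : 0 < √(1 / (4 * τ ^ 2) + p.1 ^ 2) := sqrt_pos.2 (by positivity)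
  have hcosh := cosh_pos θ
  refine ⟨?_, ?_, ?_⟩
  · have hω := one_sub_px_sq_sub_py_sq_vTheta hτ θ p
    have hω_pos : 0 < (1 / (2 * τ * cosh θ * √(1 / (4 * τ ^ 2) + p.1 ^ 2))) ^ 2 := by positivity
    linarith
  · rw [px_uTheta hτ, py_vTheta hτ, omegT_vTheta hτ, tanh_eq_sinh_div_cosh]
    field_simp
  · rw [py_uTheta hτ, px_vTheta hτ, omegT_vTheta hτ]
    field_simp
    ring
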